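/- Let r ≤ s be natural numbers. For every n, every simple graph G on n vertices with more than (s+2r)·n/2 edges has the property that every proper edge coloring of G contains a rainbow copy of the double star DS_{r,s}. (In other words, ex⋆(n, DS_{r,s}) ≤ (s+2r)n/2.) -/

import Mathlib

open SimpleGraph

/-- A proper edge coloring of `G`: edges sharing a vertex receive distinct colors. -/
def IsProperEdgeColoring {V : Type*} (G : SimpleGraph V) (c : Sym2 V → ℕ) : Prop :=
  ∀ e₁ ∈ G.edgeSet, ∀ e₂ ∈ G.edgeSet,
    e₁ ≠ e₂ → (∃ v, v ∈ e₁ ∧ v ∈ e₂) → c e₁ ≠ c e₂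

/-- The set of uniquely colored edges of `F` under the coloring `c`. -/
def uniqueEdges {V : Type*} (F : SimpleGraph V) (c : Sym2 V → ℕ) : Set (Sym2 V) :=
  {e | e ∈ F.edgeSet ∧ ∀ e' ∈ F.edgeSet, c e' = c e → e' = e}

/-- `Spec F` : the set of `k` such that `F` admits a proper edge coloring with
exactly `k` uniquely colored edges. -/
def Spec {V : Type*} (F : SimpleGraph V) : Set ℕ :=
  {k | ∃ c : Sym2 V → ℕ, IsProperEdgeColoring F c ∧ (uniqueEdges F c).ncard = k}

/-- `f` realizes a copy of `H` inside `G`. -/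
def IsCopy {W V : Type*} (H : SimpleGraph W) (G : SimpleGraph V) (f : W → V) : Prop :=
  Function.Injective f ∧ ∀ a b, H.Adj a b → G.Adj (f a) (f b)

/-- Number of uniquely colored edges of the copy of `H` given by `f`. -/
noncomputable def copyUniqueCount {W V : Type*} (H : SimpleGraph W) (c : Sym2 V → ℕ)
    (f : W → V) : ℕ :=
  {e | e ∈ H.edgeSet ∧ ∀ e' ∈ H.edgeSet, c (e'.map f) = c (e.map f) → e' = e}.ncard

def ContainsKUniqueCopy {W V : Type*} (H : SimpleGraph W) (G : SimpleGraph V)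
    (c : Sym2 V → ℕ) (k : ℕ) : Prop :=
  ∃ f : W → V, IsCopy H G f ∧ k ≤ copyUniqueCount H c f

def ContainsExactlyKUniqueCopy {W V : Type*} (H : SimpleGraph W) (G : SimpleGraph V)
    (c : Sym2 V → ℕ) (k : ℕ) : Prop :=
  ∃ f : W → V, IsCopy H G f ∧ copyUniqueCount H c f = k

def ContainsRainbowCopy {W V : Type*} (H : SimpleGraph W) (G : SimpleGraph V)
    (c : Sym2 V → ℕ) : Prop :=
  ∃ f : W → V, IsCopy H G f ∧
    ∀ e₁ ∈ H.edgeSet, ∀ e₂ ∈ H.edgeSet, e₁ ≠ e₂ → c (e₁.map f) ≠ c (e₂.map f)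

/-- The double star `DS_{a,b}`: a dominating edge `y x` with `a` pendant leaves at `y`
and `b` pendant leaves at `x`. -/
def doubleStar (a b : ℕ) : SimpleGraph (Fin 2 ⊕ Fin a ⊕ Fin b) :=
  SimpleGraph.fromEdgeSet
    ({s(Sum.inl 0, Sum.inl 1)} ∪
     {e | ∃ i : Fin a, e = s(Sum.inl 0, Sum.inr (Sum.inl i))} ∪
     {e | ∃ j : Fin b, e = s(Sum.inl 1, Sum.inr (Sum.inr j))})

/-- The caterpillar `C_{a,b,c}`: a path `x₁x₂x₃` with `a`, `b`, `c` pendant leaves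
attached at `x₁`, `x₂`, `x₃` respectively. -/
def caterpillar3 (a b c : ℕ) : SimpleGraph (Fin 3 ⊕ Fin a ⊕ Fin b ⊕ Fin c) :=
  SimpleGraph.fromEdgeSet
    ({s(Sum.inl 0, Sum.inl 1), s(Sum.inl 1, Sum.inl 2)} ∪
     {e | ∃ i : Fin a, e = s(Sum.inl 0, Sum.inr (Sum.inl i))} ∪
     {e | ∃ i : Fin b, e = s(Sum.inl 1, Sum.inr (Sum.inr (Sum.inl i)))} ∪
     {e | ∃ i : Fin c, e = s(Sum.inl 2, Sum.inr (Sum.inr (Sum.inr i)))})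

/-- The rooted tree of depth 2 whose root has `k` children, each with `m` pendant
leaves. -/
def depth2Tree (k m : ℕ) : SimpleGraph (Unit ⊕ Fin k ⊕ Fin k × Fin m) :=
  SimpleGraph.fromEdgeSet
    ({e | ∃ i : Fin k, e = s(Sum.inl (), Sum.inr (Sum.inl i))} ∪
     {e | ∃ (i : Fin k) (j : Fin m),
        e = s(Sum.inr (Sum.inl i), Sum.inr (Sum.inr (i, j)))})


/-!
If no edge joins a vertex of degree above `s + 2r` to one of degree above `r`, every neighbour of
a high-degree vertex has degree at most `r`, so by double counting the high vertices have total
degree at most that of the vertices of degree `≤ r`. Moving that mass onto those vertices leaves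
each of them with at most `2r`, every other vertex keeping at most `s + 2r`, whence
`2 e(G) = ∑ deg ≤ (s + 2r) n`, a contradiction.
So some edge `yx` has `deg y > r` and `deg x > s + 2r`. Take `r` neighbours of `y` other than `x`,
then `s` neighbours of `x` avoiding `y`, those `r` leaves, and the at most `r` neighbours `z` for
which `xz` repeats a colour of an edge at `y`. Two edges of the resulting double star that share
a vertex get distinct colours by properness; the choice at `x` handles the remaining pairs.
-/

open Finset Function

lemma Finset.exists_fin_embedding_forall_mem {α : Type*} {t : Finset α} {m : ℕ} (h : m ≤ #t) :
    ∃ f : Fin m ↪ α, ∀ i, f i ∈ t := by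
  obtain ⟨e⟩ := Function.Embedding.nonempty_of_card_le (α := Fin m) (β := t) (by simpa using h)
  exact ⟨e.trans (Embedding.subtype _), fun i => (e i).2⟩

namespace SimpleGraph

variable {V : Type*} (G : SimpleGraph V) [DecidableRel G.Adj]

lemma sum_degree_le_sum_degree_of_neighborFinset_subset [G.LocallyFinite] {A B : Finset V}
    (hAB : ∀ a ∈ A, G.neighborFinset a ⊆ B) :
    ∑ a ∈ A, G.degree a ≤ ∑ b ∈ B, G.degree b :=
  calc ∑ a ∈ A, G.degree a = ∑ a ∈ A, #(B.bipartiteAbove G.Adj a) := by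
        refine sum_congr rfl fun a ha => ?_
        rw [← card_neighborFinset_eq_degree, bipartiteAbove]
        congr 1
        ext b
        simpa [mem_neighborFinset] using fun hab => hAB a ha ((G.mem_neighborFinset a b).2 hab)
    _ = ∑ b ∈ B, #(A.bipartiteBelow G.Adj b) :=
        sum_card_bipartiteAbove_eq_sum_card_bipartiteBelow _
    _ ≤ ∑ b ∈ B, G.degree b := by
        refine sum_le_sum fun b _ => ?_
        rw [← card_neighborFinset_eq_degree]
        exact card_le_card fun a ha => by
          simpa [bipartiteBelow, adj_comm] using (mem_filter.1 ha).2

lemma exists_adj_lt_degree_of_mul_card_lt_sum_degree [Fintype V] {k r : ℕ} (hrk : 2 * r ≤ k)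
    (h : k * Fintype.card V < ∑ v, G.degree v) :
    ∃ x y, G.Adj x y ∧ k < G.degree x ∧ r < G.degree y := by
  by_contra! hlow
  set A : Finset V := {v | k < G.degree v}
  set B : Finset V := {v | G.degree v ≤ r}
  have hAB : ∑ v ∈ A, G.degree v ≤ ∑ v ∈ B, G.degree v :=
    G.sum_degree_le_sum_degree_of_neighborFinset_subset fun a ha b hb =>
      mem_filter.2 ⟨mem_univ b, hlow a b ((G.mem_neighborFinset a b).1 hb) (mem_filter.1 ha).2⟩
  have hB : ∑ v ∈ B, G.degree v =
      ∑ v with ¬k < G.degree v, if G.degree v ≤ r then G.degree v else 0 := by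
    rw [← sum_filter, filter_filter]
    congr 1
    ext v
    simp only [B, mem_filter, mem_univ, true_and]
    omega
  have : ∑ v, G.degree v ≤ k * Fintype.card V :=
    calc ∑ v, G.degree v = ∑ v ∈ A, G.degree v + ∑ v with ¬k < G.degree v, G.degree v :=
          (sum_filter_add_sum_filter_not _ _ _).symm
      _ ≤ ∑ v with ¬k < G.degree v, ((if G.degree v ≤ r then G.degree v else 0) + G.degree v) := by
          rw [sum_add_distrib, ← hB]
          omega
      _ ≤ ∑ v with ¬k < G.degree v, k := sum_le_sum fun v hv => by
          simp only [mem_filter, mem_univ, true_and] at hv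
          split_ifs <;> omega
      _ ≤ k * Fintype.card V := by
          rw [sum_const, smul_eq_mul, mul_comm]
          exact Nat.mul_le_mul_left k (card_le_univ _)
  omega

end SimpleGraph

section Coloring

variable {V : Type*} {G : SimpleGraph V} {c : Sym2 V → ℕ}

lemma IsProperEdgeColoring.ne_of_adj (hc : IsProperEdgeColoring G c) {a b b' : V}
    (hb : G.Adj a b) (hb' : G.Adj a b') (hne : b ≠ b') : c s(a, b) ≠ c s(a, b') :=
  hc _ hb _ hb' (by simp [hne, hb.ne']) ⟨a, Sym2.mem_mk_left a b, Sym2.mem_mk_left a b'⟩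

lemma IsProperEdgeColoring.card_filter_color_mem_le (hc : IsProperEdgeColoring G c)
    [DecidableRel G.Adj] [G.LocallyFinite] (x : V) (C : Finset ℕ) :
    #{z ∈ G.neighborFinset x | c s(x, z) ∈ C} ≤ #C :=
  card_le_card_of_injOn (fun z => c s(x, z)) (fun z hz => (mem_filter.1 hz).2)
    fun z hz z' hz' hzz' => by
      by_contra hne
      simp only [coe_filter, mem_neighborFinset, Set.mem_ofPred_eq] at hz hz'
      exact hc.ne_of_adj hz.1 hz'.1 hne hzz'

lemma IsCopy.map_mem_edgeSet {W : Type*} {H : SimpleGraph W} {f : W → V} (hf : IsCopy H G f)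
    {e : Sym2 W} (he : e ∈ H.edgeSet) : e.map f ∈ G.edgeSet := by
  induction e using Sym2.ind with
  | h a b => exact hf.2 a b he

lemma IsProperEdgeColoring.map_ne_of_isCopy {W : Type*} {H : SimpleGraph W} {f : W → V}
    (hc : IsProperEdgeColoring G c) (hf : IsCopy H G f) {e₁ e₂ : Sym2 W}
    (he₁ : e₁ ∈ H.edgeSet) (he₂ : e₂ ∈ H.edgeSet) (hne : e₁ ≠ e₂) (w : W)
    (hw₁ : w ∈ e₁) (hw₂ : w ∈ e₂) : c (e₁.map f) ≠ c (e₂.map f) :=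
  hc _ (hf.map_mem_edgeSet he₁) _ (hf.map_mem_edgeSet he₂) ((Sym2.map.injective hf.1).ne hne)
    ⟨f w, Sym2.mem_map.2 ⟨w, hw₁, rfl⟩, Sym2.mem_map.2 ⟨w, hw₂, rfl⟩⟩

end Coloring

lemma mem_edgeSet_doubleStar {a b : ℕ} {e : Sym2 (Fin 2 ⊕ Fin a ⊕ Fin b)} :
    e ∈ (doubleStar a b).edgeSet ↔
      e = s(Sum.inl 0, Sum.inl 1) ∨
      (∃ i : Fin a, e = s(Sum.inl 0, Sum.inr (Sum.inl i))) ∨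
      (∃ j : Fin b, e = s(Sum.inl 1, Sum.inr (Sum.inr j))) := by
  rw [doubleStar, edgeSet_fromEdgeSet]
  constructor
  · rintro ⟨h, -⟩
    simpa [or_assoc] using h
  · intro h
    refine ⟨by simpa [or_assoc] using h, ?_⟩
    rcases h with h | ⟨i, h⟩ | ⟨j, h⟩ <;> subst h <;> simp

section DoubleStar

variable {V : Type*} {G : SimpleGraph V} {r s : ℕ} {y x : V} {Y : Fin r → V} {X : Fin s → V}

lemma isCopy_doubleStar (hyx : G.Adj y x) (hY : ∀ i, G.Adj y (Y i)) (hX : ∀ j, G.Adj x (X j))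
    (hYinj : Injective Y) (hXinj : Injective X) (hYx : ∀ i, Y i ≠ x) (hXy : ∀ j, X j ≠ y)
    (hYX : ∀ i j, Y i ≠ X j) :
    IsCopy (doubleStar r s) G (Sum.elim ![y, x] (Sum.elim Y X)) := by
  refine ⟨?_, fun a b hab => ?_⟩
  · simp only [Sum.elim_injective, Fin.forall_fin_two]
    refine ⟨?_, ⟨hYinj, hXinj, hYX⟩, ?_⟩
    · intro i j hij
      fin_cases i <;> fin_cases j <;> simp_all [hyx.ne, hyx.ne.symm]
    · simp_all [(hY _).ne', (hX _).ne, Ne.symm]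
  · rcases mem_edgeSet_doubleStar.1 (show s(a, b) ∈ (doubleStar r s).edgeSet from hab) with
      h | ⟨i, h⟩ | ⟨j, h⟩ <;> rcases Sym2.eq_iff.1 h with ⟨rfl, rfl⟩ | ⟨rfl, rfl⟩ <;>
      simp [hyx, hyx.symm, hY, (hY _).symm, hX, (hX _).symm]

lemma IsProperEdgeColoring.containsRainbowCopy_doubleStar {c : Sym2 V → ℕ}
    (hc : IsProperEdgeColoring G c) (hyx : G.Adj y x) (hY : ∀ i, G.Adj y (Y i))
    (hX : ∀ j, G.Adj x (X j)) (hYinj : Injective Y) (hXinj : Injective X)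
    (hYx : ∀ i, Y i ≠ x) (hXy : ∀ j, X j ≠ y) (hYX : ∀ i j, Y i ≠ X j)
    (hcol : ∀ i j, c s(y, Y i) ≠ c s(x, X j)) :
    ContainsRainbowCopy (doubleStar r s) G c := by
  have hf := isCopy_doubleStar hyx hY hX hYinj hXinj hYx hXy hYX
  refine ⟨_, hf, fun e₁ he₁ e₂ he₂ hne => ?_⟩
  have shared := hc.map_ne_of_isCopy hf he₁ he₂ hne
  rcases mem_edgeSet_doubleStar.1 he₁ with rfl | ⟨i, rfl⟩ | ⟨j, rfl⟩ <;>
    rcases mem_edgeSet_doubleStar.1 he₂ with rfl | ⟨i', rfl⟩ | ⟨j', rfl⟩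
  all_goals first
    | (apply shared (Sum.inl 0) <;> simp <;> done)
    | (apply shared (Sum.inl 1) <;> simp <;> done)
    | simpa using hcol i j'
    | simpa using (hcol i' j).symm

lemma IsProperEdgeColoring.containsRainbowCopy_doubleStar_of_lt_degree [DecidableEq V]
    [DecidableRel G.Adj] [G.LocallyFinite] {c : Sym2 V → ℕ} (hc : IsProperEdgeColoring G c)
    (hyx : G.Adj y x) (hy : r < G.degree y) (hx : s + 2 * r < G.degree x) :
    ContainsRainbowCopy (doubleStar r s) G c := by
  obtain ⟨Y, hYmem⟩ := exists_fin_embedding_forall_mem (t := G.neighborFinset y \ {x}) (m := r) (by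
    have := le_card_sdiff {x} (G.neighborFinset y)
    simp only [card_singleton, card_neighborFinset_eq_degree] at this
    omega)
  set C : Finset ℕ := univ.image fun i => c s(y, Y i)
  set T : Finset V :=
    (G.neighborFinset x \ insert y (univ.map Y)) \ {z ∈ G.neighborFinset x | c s(x, z) ∈ C}
  have hT : s ≤ #T := by
    have h₁ := le_card_sdiff (insert y (univ.map Y)) (G.neighborFinset x)
    have h₂ : #(G.neighborFinset x \ insert y (univ.map Y)) -
        #{z ∈ G.neighborFinset x | c s(x, z) ∈ C} ≤ #T := le_card_sdiff _ _
    have h₃ := card_insert_le y (univ.map Y)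
    have h₄ := hc.card_filter_color_mem_le x C
    have h₅ : #C ≤ r := card_image_le.trans (by simp)
    simp only [card_map, card_univ, Fintype.card_fin, card_neighborFinset_eq_degree] at h₁ h₃
    omega
  obtain ⟨X, hXmem⟩ := exists_fin_embedding_forall_mem hT
  simp only [T, C, mem_sdiff, mem_singleton, mem_neighborFinset, mem_insert, mem_map, mem_univ,
    true_and, mem_filter, mem_image, not_or, not_exists] at hYmem hXmem
  exact hc.containsRainbowCopy_doubleStar hyx (fun i => (hYmem i).1) (fun j => (hXmem j).1.1)
    Y.injective X.injective (fun i => (hYmem i).2) (fun j => (hXmem j).1.2.1)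
    (fun i j => (hXmem j).1.2.2 i) (fun i j h => (hXmem j).2 ⟨(hXmem j).1.1, i, h⟩)

end DoubleStar

theorem doubleStar_rainbow_turan_upper_general (r s : ℕ)
    (n : ℕ) (G : SimpleGraph (Fin n)) (hG : (s + 2 * r) * n < 2 * G.edgeSet.ncard)
    (c : Sym2 (Fin n) → ℕ) (hc : IsProperEdgeColoring G c) :
    ContainsRainbowCopy (doubleStar r s) G c := by
  classical
  have hdeg : (s + 2 * r) * Fintype.card (Fin n) < ∑ v, G.degree v := by
    rw [sum_degrees_eq_twice_card_edges, Fintype.card_fin]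
    rwa [← coe_edgeFinset, Set.ncard_coe_finset] at hG
  obtain ⟨x, y, hxy, hx, hy⟩ := 
    G.exists_adj_lt_degree_of_mul_card_lt_sum_degree (by omega : 2 * r ≤ s + 2 * r) hdeg
  exact hc.containsRainbowCopy_doubleStar_of_lt_degree hxy.symm hy hx

/-- For `r ≤ s`, every `n`-vertex graph with more than `(s+2r)·n/2`
edges is such that every proper edge coloring contains a rainbow copy of
`DS_{r,s}`; i.e. `ex⋆(n, DS_{r,s}) ≤ (s+2r)n/2`. -/
theorem doubleStar_rainbow_turan_upper (r s : ℕ) (hrs : r ≤ s)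
    (n : ℕ) (G : SimpleGraph (Fin n)) (hG : (s + 2 * r) * n < 2 * G.edgeSet.ncard)
    (c : Sym2 (Fin n) → ℕ) (hc : IsProperEdgeColoring G c) :
    ContainsRainbowCopy (doubleStar r s) G c :=
  doubleStar_rainbow_turan_upper_general r s n G hG c hc
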